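/- For the massive Gross–Neveu soliton U_ω with ω ∈ (0,1), the L² norm satisfies ∫_ℝ |U_ω(x)|² dx = √(1−ω²)/ω. -/

import Mathlib

open MeasureTheory

/-- The massive Gross–Neveu line soliton profile. -/
noncomputable def grossNeveuSoliton (ω x : ℝ) : ℂ :=
  (↑(Real.sqrt (1 - ω ^ 2)) : ℂ) *
    ((↑(Real.sqrt (1 + ω) * Real.cosh (Real.sqrt (1 - ω ^ 2) * x)) : ℂ)
      - Complex.I * (↑(Real.sqrt (1 - ω) * Real.sinh (Real.sqrt (1 - ω ^ 2) * x)) : ℂ)) /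
    (↑(1 + ω * Real.cosh (2 * Real.sqrt (1 - ω ^ 2) * x)) : ℂ)

/-!
With `μ = √(1 - ω²)`, the density is `|U_ω(x)|² = μ² (cosh 2μx + ω) / (1 + ω cosh 2μx)²`.
The function `t ↦ (cosh t + ω) / (1 + ω cosh t)²` is the derivative of
`t ↦ sinh t / (1 + ω cosh t)`, which increases from `-1/ω` to `1/ω`, so its integral is `2/ω`;
the substitution `t = 2μx` then gives `μ² · (2/ω) / (2μ) = μ/ω`.
-/

open Real Set Filter Topology

lemma integrable_deriv_of_nonneg_of_tendsto {g g' : ℝ → ℝ} {m n : ℝ}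
    (hderiv : ∀ x, HasDerivAt g (g' x) x) (hg' : ∀ x, 0 ≤ g' x)
    (hbot : Tendsto g atBot (𝓝 m)) (htop : Tendsto g atTop (𝓝 n)) : Integrable g' := by
  have hIoi : IntegrableOn g' (Ioi 0) :=
    integrableOn_Ioi_deriv_of_nonneg' (fun x _ ↦ hderiv x) (fun x _ ↦ hg' x) htop
  have hIio : IntegrableOn g' (Iio 0) := by
    have hreflect : IntegrableOn (fun x ↦ g' (-x)) (Ioi (-0)) :=
      integrableOn_Ioi_deriv_of_nonneg' (g := fun x ↦ -g (-x))
        (fun x _ ↦ ((hderiv (-x)).comp x (hasDerivAt_neg x)).neg.congr_deriv (by ring))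
        (fun x _ ↦ hg' (-x)) (hbot.comp tendsto_neg_atTop_atBot).neg
    simpa using hreflect.comp_neg_Iio
  have hIic : IntegrableOn g' (Iic 0) := Iff.mpr integrableOn_Iic_iff_integrableOn_Iio hIio
  simpa [Iic_union_Ioi] using hIic.union hIoi

lemma one_add_mul_cosh_pos {ω : ℝ} (hω : 0 ≤ ω) (t : ℝ) : 0 < 1 + ω * cosh t := by
  nlinarith [one_le_cosh t]

lemma hasDerivAt_sinh_div_one_add_mul_cosh {ω t : ℝ} (h : 1 + ω * cosh t ≠ 0) :
    HasDerivAt (fun t ↦ sinh t / (1 + ω * cosh t))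
      ((cosh t + ω) / (1 + ω * cosh t) ^ 2) t := by
  have hden : HasDerivAt (fun t ↦ 1 + ω * cosh t) (ω * sinh t) t := by
    simpa using ((hasDerivAt_cosh t).const_mul ω).const_add 1
  refine ((hasDerivAt_sinh t).div hden h).congr_deriv ?_
  congr 1
  linear_combination ω * cosh_sq_sub_sinh_sq t

lemma sinh_div_one_add_mul_cosh_eq {ω : ℝ} (hω : 0 ≤ ω) (t : ℝ) :
    sinh t / (1 + ω * cosh t) = (1 - exp (-t) ^ 2) / (2 * exp (-t) + ω * (1 + exp (-t) ^ 2)) := by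
  have hprod : exp t * exp (-t) = 1 := by rw [← exp_add, add_neg_cancel, exp_zero]
  have hv := exp_pos (-t)
  rw [div_eq_div_iff (one_add_mul_cosh_pos hω t).ne' (by positivity), sinh_eq, cosh_eq]
  linear_combination (1 + ω * exp (-t)) * hprod

lemma tendsto_sinh_div_one_add_mul_cosh_atTop {ω : ℝ} (hω : 0 < ω) :
    Tendsto (fun t ↦ sinh t / (1 + ω * cosh t)) atTop (𝓝 ω⁻¹) := by
  have hcont : ContinuousAt (fun v : ℝ ↦ (1 - v ^ 2) / (2 * v + ω * (1 + v ^ 2))) 0 :=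
    ContinuousAt.div (by fun_prop) (by fun_prop) (by simpa using hω.ne')
  have hlim : Tendsto (fun v : ℝ ↦ (1 - v ^ 2) / (2 * v + ω * (1 + v ^ 2))) (𝓝 0) (𝓝 ω⁻¹) := by
    simpa using hcont.tendsto
  simp_rw [sinh_div_one_add_mul_cosh_eq hω.le]
  exact hlim.comp tendsto_exp_neg_atTop_nhds_zero

lemma tendsto_sinh_div_one_add_mul_cosh_atBot {ω : ℝ} (hω : 0 < ω) :
    Tendsto (fun t ↦ sinh t / (1 + ω * cosh t)) atBot (𝓝 (-ω⁻¹)) := by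
  have hodd : ∀ t, sinh t / (1 + ω * cosh t) = -(sinh (-t) / (1 + ω * cosh (-t))) := by
    intro t
    rw [sinh_neg, cosh_neg, neg_div, neg_neg]
  exact (((tendsto_sinh_div_one_add_mul_cosh_atTop hω).comp tendsto_neg_atBot_atTop).neg).congr
    fun t ↦ (hodd t).symm

lemma integral_cosh_add_div_one_add_mul_cosh_sq {ω : ℝ} (hω : 0 < ω) :
    ∫ t, (cosh t + ω) / (1 + ω * cosh t) ^ 2 = 2 / ω := by
  have hderiv t := hasDerivAt_sinh_div_one_add_mul_cosh (one_add_mul_cosh_pos hω.le t).ne'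
  have hbot := tendsto_sinh_div_one_add_mul_cosh_atBot hω
  have htop := tendsto_sinh_div_one_add_mul_cosh_atTop hω
  have hnonneg t : 0 ≤ (cosh t + ω) / (1 + ω * cosh t) ^ 2 := by
    have := cosh_pos t
    positivity
  rw [integral_of_hasDerivAt_of_tendsto hderiv
    (integrable_deriv_of_nonneg_of_tendsto hderiv hnonneg hbot htop) hbot htop]
  ring

lemma norm_grossNeveuSoliton_sq {ω : ℝ} (h₁ : -1 ≤ ω) (h₂ : ω ≤ 1) (x : ℝ) :
    ‖grossNeveuSoliton ω x‖ ^ 2 = (1 - ω ^ 2) *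
      ((cosh (2 * √(1 - ω ^ 2) * x) + ω) / (1 + ω * cosh (2 * √(1 - ω ^ 2) * x)) ^ 2) := by
  set μ := √(1 - ω ^ 2)
  have hμ : μ ^ 2 = 1 - ω ^ 2 := sq_sqrt (by nlinarith)
  have hp : √(1 + ω) ^ 2 = 1 + ω := sq_sqrt (by linarith)
  have hm : √(1 - ω) ^ 2 = 1 - ω := sq_sqrt (by linarith)
  have hcosh : cosh (2 * μ * x) = cosh (μ * x) ^ 2 + sinh (μ * x) ^ 2 := by
    rw [mul_assoc, cosh_two_mul]
  have hnum : Complex.normSq (↑(√(1 + ω) * cosh (μ * x)) - Complex.I * ↑(√(1 - ω) * sinh (μ * x)))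
      = cosh (2 * μ * x) + ω := by
    simp only [Complex.normSq_apply, Complex.sub_re, Complex.sub_im, Complex.ofReal_re,
      Complex.ofReal_im, Complex.mul_re, Complex.mul_im, Complex.I_re, Complex.I_im]
    linear_combination cosh (μ * x) ^ 2 * hp + sinh (μ * x) ^ 2 * hm - hcosh +
      ω * cosh_sq_sub_sinh_sq (μ * x)
  rw [Complex.sq_norm, grossNeveuSoliton, map_div₀, map_mul, hnum, Complex.normSq_ofReal,
    Complex.normSq_ofReal]
  linear_combination (cosh (2 * μ * x) + ω) / (1 + ω * cosh (2 * μ * x)) ^ 2 * hμ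

/-- L² norm of the Gross–Neveu soliton: ∫ |U_ω|² = √(1−ω²)/ω. -/
theorem grossNeveuSoliton_L2 (ω : ℝ) (hω : ω ∈ Set.Ioo (0 : ℝ) 1) :
    ∫ x : ℝ, ‖grossNeveuSoliton ω x‖ ^ 2 = Real.sqrt (1 - ω ^ 2) / ω := by
  obtain ⟨hω₀, hω₁⟩ := hω
  have hμ : 0 < √(1 - ω ^ 2) := sqrt_pos.2 (by nlinarith)
  simp_rw [norm_grossNeveuSoliton_sq (by linarith) hω₁.le]
  rw [integral_const_mul, Measure.integral_comp_mul_left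
    (fun t ↦ (cosh t + ω) / (1 + ω * cosh t) ^ 2), integral_cosh_add_div_one_add_mul_cosh_sq hω₀,
    smul_eq_mul, abs_of_pos (by positivity)]
  field_simp
  rw [sq_sqrt (by nlinarith)]
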